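/- arXiv:hep-th/0609125 — 2 statements merged into one kernel-verified Lean document; each statement's English description precedes it below -/
import Mathlib

section
/- Let n > 0, E ∈ ℝ, k ∈ ℝ, K > 0, and let P, u : ℝ → ℝ with u twice differentiable, u > 0, satisfying u''(x) + (E − P(x)) u(x) = −(n k/2) u(x)^((4−n)/n) for all x. Let σ be differentiable on an open interval I with σ'(t) = u(σ(t)), and let ψ : ℝ → ℝ be differentiable with ψ'(x)² = (4/(n K²)) P(x) for all x. Define a(t) = u(σ(t))^(−2/n), φ(t) = ψ(σ(t)), H(t) = a'(t)/a(t), and D = −12E/(n² K²). Then for all t ∈ I: φ'(t)² = −(2/K²)(H'(t) − k/a(t)²) − n D/(3 a(t)^n). -/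
/-!
Along the flow σ' = u ∘ σ the chain rule turns every time derivative of a function of σ
into u times its x-derivative. Hence the Hubble rate of a = (u ∘ σ)^(-2/n), being a
logarithmic derivative, is H = -(2/n) u'(σ), and H' = -(2/n) u''(σ) u(σ), while
φ'² = ψ'(σ)² u(σ)² = (4/(nK²)) P(σ) u(σ)². Eliminating u'' with the Schrödinger
equation leaves an identity between real powers of u(σ).
-/

open Set Filter Topology

theorem HasDerivAt.logDeriv_rpow_const {f : ℝ → ℝ} {f' x : ℝ} (p : ℝ)
    (hf : HasDerivAt f f' x) (hx : 0 < f x) :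
    logDeriv (fun y => f y ^ p) x = p * (f' / f x) := by
  rw [logDeriv_apply, (hf.rpow_const (Or.inl hx.ne')).deriv, Real.rpow_sub_one hx.ne']
  have : f x ^ p ≠ 0 := (Real.rpow_pos_of_pos hx p).ne'
  field_simp

section Flow

variable {u σ : ℝ → ℝ} {t : ℝ}

theorem logDeriv_rpow_comp_of_hasDerivAt_flow (p : ℝ) (hu : DifferentiableAt ℝ u (σ t))
    (hpos : 0 < u (σ t)) (hσ : HasDerivAt σ (u (σ t)) t) :
    logDeriv (fun s => u (σ s) ^ p) t = p * deriv u (σ t) := by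
  have hv : HasDerivAt (fun s => u (σ s)) (deriv u (σ t) * u (σ t)) t := hu.hasDerivAt.comp t hσ
  rw [hv.logDeriv_rpow_const p hpos, mul_div_cancel_right₀ _ hpos.ne']

theorem deriv_logDeriv_rpow_comp_of_hasDerivAt_flow {s : Set ℝ} (hs : IsOpen s) (ht : t ∈ s)
    (p : ℝ) (hu : ∀ r ∈ s, DifferentiableAt ℝ u (σ r))
    (hu' : DifferentiableAt ℝ (deriv u) (σ t))
    (hpos : ∀ r ∈ s, 0 < u (σ r)) (hσ : ∀ r ∈ s, HasDerivAt σ (u (σ r)) r) :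
    deriv (logDeriv (fun r => u (σ r) ^ p)) t = p * (deriv (deriv u) (σ t) * u (σ t)) := by
  have hlog : logDeriv (fun r => u (σ r) ^ p) =ᶠ[𝓝 t] fun r => p * deriv u (σ r) :=
    eventually_of_mem (hs.mem_nhds ht) fun r hr =>
      logDeriv_rpow_comp_of_hasDerivAt_flow p (hu r hr) (hpos r hr) (hσ r hr)
  have hu'σ : HasDerivAt (fun r => deriv u (σ r)) (deriv (deriv u) (σ t) * u (σ t)) t :=
    hu'.hasDerivAt.comp t (hσ t ht)
  rw [hlog.deriv_eq, (hu'σ.const_mul p).deriv]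

end Flow

theorem kinetic_identity_of_schrodinger {n E k K P v w : ℝ} (hn : n ≠ 0) (hK : K ≠ 0)
    (hv : 0 < v) (hS : w + (E - P) * v = -(n * k / 2) * v ^ ((4 - n) / n)) :
    4 / (n * K ^ 2) * P * v ^ 2
      = -(2 / K ^ 2) * (-2 / n * (w * v) - k / (v ^ (-2 / n)) ^ 2)
        - n * (-12 * E / (n ^ 2 * K ^ 2)) / (3 * (v ^ (-2 / n)) ^ n) := by
  have hsq : (v ^ (-2 / n)) ^ 2 = (v ^ (4 / n))⁻¹ := by
    rw [← Real.rpow_natCast, ← Real.rpow_mul hv.le, ← Real.rpow_neg hv.le]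
    congr 1
    push_cast
    ring
  have hpow : (v ^ (-2 / n)) ^ n = (v ^ 2)⁻¹ := by
    rw [← Real.rpow_mul hv.le, div_mul_cancel₀ _ hn, Real.rpow_neg hv.le, Real.rpow_two]
  have hshift : v ^ ((4 - n) / n) * v = v ^ (4 / n) := by
    rw [← Real.rpow_add_one hv.ne']
    congr 1
    field_simp
    ring
  have hw : w * v = -(E - P) * v ^ 2 - n * k / 2 * v ^ (4 / n) := by
    linear_combination v * hS - (n * k / 2) * hshift
  rw [hsq, hpow, hw]
  have : v ^ (4 / n) ≠ 0 := (Real.rpow_pos_of_pos hv _).ne'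
  field_simp
  ring

/-- Equation (3.4) of Theorem 1: the constructed scalar field
φ = ψ∘σ satisfies φ'² = −(2/K²)(H' − k/a²) − nD/(3aⁿ). -/
theorem scalar_field_kinetic_equation
    (n E k K : ℝ) (hn : 0 < n) (hK : 0 < K) (P u : ℝ → ℝ)
    (hu : Differentiable ℝ u) (hu' : Differentiable ℝ (deriv u))
    (hupos : ∀ x, 0 < u x)
    (hSchr : ∀ x, deriv (deriv u) x + (E - P x) * u x
      = -(n * k / 2) * u x ^ ((4 - n) / n))
    (t₁ t₂ : ℝ) (σ : ℝ → ℝ)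
    (hσ : ∀ t ∈ Set.Ioo t₁ t₂, DifferentiableAt ℝ σ t)
    (hσ' : ∀ t ∈ Set.Ioo t₁ t₂, deriv σ t = u (σ t))
    (ψ : ℝ → ℝ) (hψ : Differentiable ℝ ψ)
    (hψ' : ∀ x, (deriv ψ x) ^ 2 = 4 / (n * K ^ 2) * P x)
    (a φ H : ℝ → ℝ) (D : ℝ)
    (ha : a = fun t => u (σ t) ^ (-2 / n))
    (hφ : φ = fun t => ψ (σ t))
    (hH : H = fun t => deriv a t / a t)
    (hD : D = -12 * E / (n ^ 2 * K ^ 2)) :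
    ∀ t ∈ Set.Ioo t₁ t₂,
      (deriv φ t) ^ 2
        = -(2 / K ^ 2) * (deriv H t - k / a t ^ 2) - n * D / (3 * a t ^ n) := by
  intro t ht
  have hflow : ∀ r ∈ Ioo t₁ t₂, HasDerivAt σ (u (σ r)) r := fun r hr =>
    hσ' r hr ▸ (hσ r hr).hasDerivAt
  have hφ' : HasDerivAt φ (deriv ψ (σ t) * u (σ t)) t :=
    hφ ▸ (hψ (σ t)).hasDerivAt.comp t (hflow t ht)
  rw [show H = logDeriv a from hH, hφ'.deriv, mul_pow, hψ', hD]
  subst ha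
  rw [deriv_logDeriv_rpow_comp_of_hasDerivAt_flow isOpen_Ioo ht (-2 / n)
    (fun r _ => hu (σ r)) (hu' (σ t)) (fun r _ => hupos (σ r)) hflow]
  exact kinetic_identity_of_schrodinger hn.ne' hK.ne' (hupos (σ t)) (hSchr (σ t))
end

section
/- Let λ ∈ ℝ, λ ≠ 0, and A > 0. Define u(x) = −(3√3/4)·tanh( sqrt(27/8)·λ·x ). Then for all x ∈ ℝ: u''(x) + ((A + 27λ²/4) − A)·u(x) = 4λ²·u(x)³; that is, u solves the Schrödinger-type equation u'' + (E − P)u = −(nk/2)·u^((4−n)/n) with E = A + 27λ²/4, constant potential P(x) = A, n = 1 and curvature parameter k = −8λ². -/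
open Real

/-!
With `t = tanh (c x)` one has `t' = c (1 - t²)`, hence `t'' = -2 c² t (1 - t²)`, so
`u = a t` satisfies `u'' + 2 c² u = (2 c² / a²) u³`. For `a² = 27/16` and `c² = 27 λ² / 8`
the two coefficients are `27 λ² / 4` and `4 λ²`.
-/

namespace Real

theorem hasDerivAt_tanh (x : ℝ) : HasDerivAt tanh (1 - tanh x ^ 2) x := by
  have h := (hasDerivAt_sinh x).div (hasDerivAt_cosh x) (cosh_pos x).ne'
  rw [show sinh / cosh = tanh from funext fun y => (tanh_eq_sinh_div_cosh y).symm] at h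
  refine h.congr_deriv ?_
  rw [tanh_eq_sinh_div_cosh]
  field_simp

theorem hasDerivAt_tanh_mul (c x : ℝ) :
    HasDerivAt (fun y => tanh (c * y)) (c * (1 - tanh (c * x) ^ 2)) x :=
  ((hasDerivAt_tanh (c * x)).comp x ((hasDerivAt_id x).const_mul c)).congr_deriv <| by
    simp [mul_comm]

theorem deriv_const_mul_tanh_mul (a c : ℝ) :
    deriv (fun y => a * tanh (c * y)) = fun x => a * c * (1 - tanh (c * x) ^ 2) :=
  funext fun x => ((hasDerivAt_tanh_mul c x).const_mul a).deriv.trans (mul_assoc _ _ _).symm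

theorem deriv_deriv_const_mul_tanh_mul (a c x : ℝ) :
    deriv (deriv fun y => a * tanh (c * y)) x
      = -2 * c ^ 2 * (a * tanh (c * x)) * (1 - tanh (c * x) ^ 2) := by
  rw [deriv_const_mul_tanh_mul]
  have h := (((hasDerivAt_tanh_mul c x).fun_pow 2).const_sub 1).const_mul (a * c)
  rw [h.deriv]
  push_cast
  ring

theorem deriv_deriv_const_mul_tanh_mul_add {a : ℝ} (ha : a ≠ 0) (c x : ℝ) :
    deriv (deriv fun y => a * tanh (c * y)) x + 2 * c ^ 2 * (a * tanh (c * x))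
      = 2 * c ^ 2 / a ^ 2 * (a * tanh (c * x)) ^ 3 := by
  rw [deriv_deriv_const_mul_tanh_mul]
  field_simp
  ring

end Real

theorem tanh_schrodinger_solution_general
    (lam A : ℝ)
    (u : ℝ → ℝ)
    (hu : u = fun x => -(3 * Real.sqrt 3 / 4) * Real.tanh (Real.sqrt (27 / 8) * lam * x)) :
    ∀ x : ℝ,
      deriv (deriv u) x + ((A + 27 * lam ^ 2 / 4) - A) * u x
        = 4 * lam ^ 2 * u x ^ 3 := by
  intro x
  have ha : (-(3 * √3 / 4)) ^ 2 = 27 / 16 := by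
    rw [neg_sq, div_pow, mul_pow, sq_sqrt zero_le_three]
    norm_num
  have hc : (√(27 / 8) * lam) ^ 2 = 27 / 8 * lam ^ 2 := by
    rw [mul_pow, sq_sqrt (by norm_num)]
  have hode := deriv_deriv_const_mul_tanh_mul_add
    (a := -(3 * √3 / 4)) (neg_ne_zero.mpr (by positivity)) (√(27 / 8) * lam) x
  rw [ha, hc] at hode
  subst hu
  linear_combination hode

/-- The fourth example of Section 4: u(x) = −(3√3/4)·tanh(√(27/8)·λx)
solves the Schrödinger-type equation with E = A + 27λ²/4, constant potential
P = A, n = 1 and curvature parameter k = −8λ², i.e. u'' + (E − A)u = 4λ²u³. -/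
theorem tanh_schrodinger_solution
    (lam A : ℝ) (hlam : lam ≠ 0) (hA : 0 < A)
    (u : ℝ → ℝ)
    (hu : u = fun x => -(3 * Real.sqrt 3 / 4) * Real.tanh (Real.sqrt (27 / 8) * lam * x)) :
    ∀ x : ℝ,
      deriv (deriv u) x + ((A + 27 * lam ^ 2 / 4) - A) * u x
        = 4 * lam ^ 2 * u x ^ 3 :=
  tanh_schrodinger_solution_general lam A u hu
end
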